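/- For every k ≥ 2 and every n ≥ 2: |2k·α_n − (2k−1)^{n−1}| ≤ 3. -/

import Mathlib

/-!
Common setup: `Fk k` is the free group `F_k` on `k` generators; letters of the
alphabet `S_k = {g_1,…,g_k,g_1⁻¹,…,g_k⁻¹}` are encoded as pairs in `Fin k × Bool`
(`(i, true)` is `g_{i+1}`, `(i, false)` is `g_{i+1}⁻¹`); `wlen u` is the length of the
unique reduced word representing `u`; `words k n` is the (finite) set of elements of
length `n`; `w k n` is `w_n`, the sum of all reduced words of length `n` in the group
algebra `ℂ[F_k] = MonoidAlgebra ℂ (Fk k)`.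
-/

open scoped BigOperators

noncomputable section

abbrev Fk (k : ℕ) := FreeGroup (Fin k)

/-- The length `|u|` of the unique reduced word representing `u`. -/
def wlen {k : ℕ} (u : Fk k) : ℕ := (FreeGroup.toWord u).length

/-- The `Finset` of all elements of `F_k` whose reduced word has length `n`,
realized as the images of the reduced lists of letters of length `n`. -/
def words (k n : ℕ) : Finset (Fk k) :=
  (Finset.univ.filter
      (fun v : List.Vector (Fin k × Bool) n => FreeGroup.reduce v.toList = v.toList)).image
    (fun v => FreeGroup.mk v.toList)

/-- `w_n`: the sum of all reduced words of length `n` in the group algebra `ℂ[F_k]`. -/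
def w (k n : ℕ) : MonoidAlgebra ℂ (Fk k) :=
  ∑ u ∈ words k n, MonoidAlgebra.of ℂ (Fk k) u

/-- The first letter of the reduced word representing `u` (if any). -/
def firstLetter {k : ℕ} (u : Fk k) : Option (Fin k × Bool) := (FreeGroup.toWord u).head?

/-- The last letter of the reduced word representing `u` (if any). -/
def lastLetter {k : ℕ} (u : Fk k) : Option (Fin k × Bool) := (FreeGroup.toWord u).getLast?

/-- The inverse of a letter. -/
def linv {k : ℕ} (a : Fin k × Bool) : Fin k × Bool := (a.1, !a.2)

/-- The set of reduced words of length `n` beginning with the letter `x` and ending with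
the letter `y`. -/
def wordsXY (k n : ℕ) (x y : Fin k × Bool) : Finset (Fk k) :=
  (words k n).filter (fun u => firstLetter u = some x ∧ lastLetter u = some y)

/-- `ν_n(x,y)`: the number of reduced words of length `n` beginning with `x`, ending with `y`. -/
def nu (k n : ℕ) (x y : Fin k × Bool) : ℕ := (wordsXY k n x y).card

/-- `w_n(x,y)`: the sum of all reduced words of length `n` beginning with `x` and ending
with `y`, in `ℂ[F_k]`. -/
def wXY (k n : ℕ) (x y : Fin k × Bool) : MonoidAlgebra ℂ (Fk k) :=
  ∑ u ∈ wordsXY k n x y, MonoidAlgebra.of ℂ (Fk k) u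

/-- `ν_n(σ,τ)`: the number of reduced words of length `n` whose first letter lies in `σ`
and whose last letter lies in `τ`. -/
def nuS (k n : ℕ) (σ τ : Finset (Fin k × Bool)) : ℕ :=
  ((words k n).filter
    (fun u => (∃ a ∈ σ, firstLetter u = some a) ∧ (∃ b ∈ τ, lastLetter u = some b))).card

/-- The inner product `⟨a,b⟩ = Σ_g a_g conj(b_g)` on a group algebra. -/
def inn {Γ : Type*} [Group Γ] (a b : MonoidAlgebra ℂ Γ) : ℂ :=
  ∑ g ∈ a.coeff.support, a.coeff g * (starRingEnd ℂ) (b.coeff g)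

/-- `‖a‖₂² = ⟨a,a⟩ = Σ_g |a_g|²`. -/
def n2sq {Γ : Type*} [Group Γ] (a : MonoidAlgebra ℂ Γ) : ℝ :=
  ∑ g ∈ a.coeff.support, Complex.normSq (a.coeff g)

/-- `‖a‖₂ = ⟨a,a⟩^{1/2}`. -/
def n2 {Γ : Type*} [Group Γ] (a : MonoidAlgebra ℂ Γ) : ℝ := Real.sqrt (n2sq a)

/-- The conditional expectation onto the Laplacian masa, restricted to `ℂ[F_k]`:
`E(a) = Σ_{n ≥ 0} (⟨a,w_n⟩ / ‖w_n‖₂²) w_n` (a finite sum for each `a`). -/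
def Ee {k : ℕ} (a : MonoidAlgebra ℂ (Fk k)) : MonoidAlgebra ℂ (Fk k) :=
  ∑ᶠ n : ℕ, (inn a (w k n) / (n2sq (w k n) : ℂ)) • w k n

/-- `α_n = ν_n(g₁,g₂)`. -/
def alph (k n : ℕ) (hk : 2 ≤ k) : ℕ :=
  nu k n ((⟨0, by omega⟩ : Fin k), true) ((⟨1, by omega⟩ : Fin k), true)

/-- `β_n = ν_n(g₁,g₁)`. -/
def bet (k n : ℕ) (hk : 2 ≤ k) : ℕ :=
  nu k n ((⟨0, by omega⟩ : Fin k), true) ((⟨0, by omega⟩ : Fin k), true)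

/-- `γ_n = ν_n(g₁,g₁⁻¹)`. -/
def gam (k n : ℕ) (hk : 2 ≤ k) : ℕ :=
  nu k n ((⟨0, by omega⟩ : Fin k), true) ((⟨0, by omega⟩ : Fin k), false)

/-!
Appending a letter `y` to a reduced word keeps it reduced unless the word ends in `y⁻¹`; hence
`ν_{n+1}(x, y) + ν_n(x, y⁻¹) = T_n`, where `T_n = (2k-1)^{n-1}` is the number of reduced words of
length `n` starting with `x`. By induction on `n`, `A_n := ν_n(x, y)` is the same for all `2k - 2`
letters `y ∉ {x, x⁻¹}`, and `2 A_n - ν_n(x, x) - ν_n(x, x⁻¹) = (-1)^n`. Sorting the words by their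
last letter gives `T_n = ν_n(x, x) + ν_n(x, x⁻¹) + (2k - 2) A_n`, so `2k A_n - T_n = (-1)^n`.
-/

open Finset

namespace FreeGroup

variable {α : Type*}

lemma isReduced_concat_iff {L : List (α × Bool)} {y : α × Bool} :
    IsReduced (L ++ [y]) ↔ IsReduced L ∧ L.getLast? ≠ some (y.1, !y.2) := by
  rw [IsReduced, List.isChain_append]
  cases L.getLast? <;> simp [IsReduced, Prod.ext_iff, Bool.eq_not]

variable [Fintype α]

lemma sum_comp_letter_inv {M : Type*} [AddCommMonoid M] (f : α × Bool → M) :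
    ∑ y : α × Bool, f (y.1, !y.2) = ∑ y, f y :=
  ((Equiv.refl α).prodCongr Equiv.boolNot).sum_comp f

lemma card_letters : Fintype.card (α × Bool) = 2 * Fintype.card α := by
  rw [Fintype.card_prod, Fintype.card_bool, mul_comm]

variable [DecidableEq α]

instance : DecidablePred (IsReduced : List (α × Bool) → Prop) :=
  fun L => inferInstanceAs (Decidable (L.IsChain _))

variable (α) in
def reducedWords (n : ℕ) : Finset (List (α × Bool)) :=
  ((univ : Finset (List.Vector (α × Bool) n)).map
    ⟨List.Vector.toList, List.Vector.toList_injective⟩).filter IsReduced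

def reducedWordsFrom (n : ℕ) (x : α × Bool) : Finset (List (α × Bool)) :=
  (reducedWords α n).filter (·.head? = some x)

def reducedWordsFromTo (n : ℕ) (x y : α × Bool) : Finset (List (α × Bool)) :=
  (reducedWordsFrom n x).filter (·.getLast? = some y)

lemma mem_reducedWords {n : ℕ} {L : List (α × Bool)} :
    L ∈ reducedWords α n ↔ L.length = n ∧ IsReduced L := by
  simp only [reducedWords, mem_filter, mem_map, mem_univ, true_and, Function.Embedding.coeFn_mk]
  exact and_congr_left' ⟨fun ⟨v, hv⟩ => hv ▸ v.toList_length, fun h => ⟨⟨L, h⟩, rfl⟩⟩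

lemma reducedWordsFrom_one (x : α × Bool) : reducedWordsFrom 1 x = {[x]} := by
  ext L
  simp only [reducedWordsFrom, mem_filter, mem_reducedWords, List.length_eq_one_iff,
    mem_singleton]
  constructor
  · rintro ⟨⟨⟨a, rfl⟩, -⟩, h⟩
    simp_all
  · rintro rfl
    exact ⟨⟨⟨x, rfl⟩, IsReduced.singleton⟩, rfl⟩

lemma card_reducedWordsFromTo_one (x y : α × Bool) :
    #(reducedWordsFromTo 1 x y) = if x = y then 1 else 0 := by
  rw [reducedWordsFromTo, reducedWordsFrom_one, filter_singleton]
  split_ifs <;> simp_all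

lemma card_reducedWordsFrom_eq_sum {n : ℕ} (hn : 0 < n) (x : α × Bool) :
    #(reducedWordsFrom n x) = ∑ y, #(reducedWordsFromTo n x y) := by
  have hnone : (reducedWordsFrom n x).filter (·.getLast? = none) = ∅ := by
    refine filter_eq_empty_iff.2 fun L hL => ?_
    have hlen := (mem_reducedWords.1 (mem_filter.1 hL).1).1
    simpa [List.getLast?_eq_none_iff, ← List.length_eq_zero_iff, hlen] using hn.ne'
  rw [card_eq_sum_card_fiberwise (f := List.getLast?) (t := univ)
    (fun _ _ => mem_coe.2 (mem_univ _)), Fintype.sum_option, hnone, card_empty, zero_add]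
  rfl

lemma card_reducedWordsFromTo_succ {n : ℕ} (hn : 0 < n) (x y : α × Bool) :
    #(reducedWordsFromTo (n + 1) x y) =
      #((reducedWordsFrom n x).filter (·.getLast? ≠ some (y.1, !y.2))) := by
  refine card_nbij' List.dropLast (· ++ [y]) ?_ ?_ ?_ ?_
  · intro L hL
    simp only [reducedWordsFromTo, reducedWordsFrom, mem_coe, mem_filter,
      mem_reducedWords] at hL ⊢
    obtain ⟨⟨⟨hlen, hred⟩, hhead⟩, hlast⟩ := hL
    rw [← List.dropLast_append_getLast? y hlast, isReduced_concat_iff] at hred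
    refine ⟨⟨⟨by simp [hlen], hred.1⟩, ?_⟩, hred.2⟩
    rw [List.head?_dropLast, if_pos (by omega), hhead]
  · intro L hL
    simp only [reducedWordsFromTo, reducedWordsFrom, mem_coe, mem_filter,
      mem_reducedWords] at hL ⊢
    obtain ⟨⟨⟨hlen, hred⟩, hhead⟩, hlast⟩ := hL
    refine ⟨⟨⟨by simp [hlen], isReduced_concat_iff.2 ⟨hred, hlast⟩⟩, ?_⟩, List.getLast?_concat⟩
    rw [List.head?_append, hhead, Option.some_or]
  · intro L hL
    exact List.dropLast_append_getLast? y (mem_filter.1 hL).2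
  · intro L _
    exact List.dropLast_concat

lemma card_reducedWordsFromTo_succ_add {n : ℕ} (hn : 0 < n) (x y : α × Bool) :
    #(reducedWordsFromTo (n + 1) x y) + #(reducedWordsFromTo n x (y.1, !y.2)) =
      #(reducedWordsFrom n x) := by
  rw [card_reducedWordsFromTo_succ hn, reducedWordsFromTo, add_comm]
  exact card_filter_add_card_filter_not _

lemma card_reducedWordsFrom {n : ℕ} (hn : 0 < n) (x : α × Bool) :
    #(reducedWordsFrom n x) = (2 * Fintype.card α - 1) ^ (n - 1) := by
  induction n, hn using Nat.le_induction with
  | base => simp [reducedWordsFrom_one]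
  | succ n hn ih =>
    have hrec : #(reducedWordsFrom (n + 1) x) + #(reducedWordsFrom n x) =
        2 * Fintype.card α * #(reducedWordsFrom n x) := calc
      _ = ∑ y, (#(reducedWordsFromTo (n + 1) x y) + #(reducedWordsFromTo n x (y.1, !y.2))) := by
        rw [sum_add_distrib, sum_comp_letter_inv fun y => #(reducedWordsFromTo n x y),
          ← card_reducedWordsFrom_eq_sum hn, ← card_reducedWordsFrom_eq_sum n.succ_pos]
      _ = ∑ _y : α × Bool, #(reducedWordsFrom n x) :=
        sum_congr rfl fun y _ => card_reducedWordsFromTo_succ_add hn x y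
      _ = 2 * Fintype.card α * #(reducedWordsFrom n x) := by
        rw [sum_const, card_univ, card_letters, smul_eq_mul]
    rw [Nat.eq_sub_of_add_eq hrec, ← Nat.sub_one_mul, ih, ← pow_succ', Nat.sub_add_cancel hn,
      Nat.add_sub_cancel]

lemma card_reducedWordsFromTo_eq_of_fst_ne {n : ℕ} (hn : 0 < n) {x y y' : α × Bool}
    (hy : y.1 ≠ x.1) (hy' : y'.1 ≠ x.1) :
    #(reducedWordsFromTo n x y) = #(reducedWordsFromTo n x y') := by
  induction n, hn using Nat.le_induction generalizing y y' with
  | base =>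
    rw [card_reducedWordsFromTo_one, card_reducedWordsFromTo_one, if_neg, if_neg] <;>
      rintro rfl <;> contradiction
  | succ n hn ih =>
    have h := card_reducedWordsFromTo_succ_add hn x y
    have h' := card_reducedWordsFromTo_succ_add hn x y'
    have := ih (y := (y.1, !y.2)) (y' := (y'.1, !y'.2)) hy hy'
    omega

lemma card_reducedWordsFrom_eq_add {n : ℕ} (hn : 0 < n) {x y : α × Bool} (hy : y.1 ≠ x.1) :
    #(reducedWordsFrom n x) = ∑ b, #(reducedWordsFromTo n x (x.1, b)) +
      2 * (Fintype.card α - 1) * #(reducedWordsFromTo n x y) := by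
  rw [card_reducedWordsFrom_eq_sum hn, Fintype.sum_prod_type,
    ← add_sum_erase univ _ (mem_univ x.1)]
  have hoff : ∀ a ∈ univ.erase x.1, ∑ b, #(reducedWordsFromTo n x (a, b)) =
      2 * #(reducedWordsFromTo n x y) := fun a ha => by
    have ha : a ≠ x.1 := ne_of_mem_erase ha
    rw [Fintype.sum_bool, card_reducedWordsFromTo_eq_of_fst_ne hn (y := (a, true)) ha hy,
      card_reducedWordsFromTo_eq_of_fst_ne hn (y := (a, false)) ha hy, two_mul]
  rw [sum_congr rfl hoff, sum_const, card_erase_of_mem (mem_univ _), card_univ, smul_eq_mul,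
    mul_left_comm, mul_assoc]

lemma two_mul_card_reducedWordsFromTo_sub_sum {n : ℕ} (hn : 0 < n) {x y : α × Bool}
    (hy : y.1 ≠ x.1) :
    2 * (#(reducedWordsFromTo n x y) : ℤ) - ∑ b, (#(reducedWordsFromTo n x (x.1, b)) : ℤ) =
      (-1) ^ n := by
  induction n, hn using Nat.le_induction with
  | base =>
    obtain ⟨a, b⟩ := x
    rw [card_reducedWordsFromTo_one, if_neg (by rintro rfl; contradiction)]
    cases b <;> simp [card_reducedWordsFromTo_one]
  | succ n hn ih =>
    have hA := card_reducedWordsFromTo_succ_add hn x y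
    rw [card_reducedWordsFromTo_eq_of_fst_ne hn (y := (y.1, !y.2)) hy hy] at hA
    have hB := card_reducedWordsFromTo_succ_add hn x (x.1, true)
    have hC := card_reducedWordsFromTo_succ_add hn x (x.1, false)
    simp only [Bool.not_true, Bool.not_false] at hB hC
    rw [Fintype.sum_bool] at ih ⊢
    zify at hA hB hC
    linear_combination (-1 : ℤ) * ih + 2 * hA - hB - hC

theorem two_mul_card_mul_card_reducedWordsFromTo_sub_pow {n : ℕ} (hn : 0 < n)
    {x y : α × Bool} (hy : y.1 ≠ x.1) :
    2 * (Fintype.card α : ℤ) * #(reducedWordsFromTo n x y) - (2 * Fintype.card α - 1) ^ (n - 1) =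
      (-1) ^ n := by
  have hα : 0 < Fintype.card α := Fintype.card_pos_iff.2 ⟨x.1⟩
  have hsplit := card_reducedWordsFrom_eq_add hn hy
  rw [card_reducedWordsFrom hn] at hsplit
  zify [hα, (by omega : 1 ≤ 2 * Fintype.card α)] at hsplit
  rw [Fintype.sum_bool] at hsplit
  have halt := two_mul_card_reducedWordsFromTo_sub_sum hn hy
  rw [Fintype.sum_bool] at halt
  linear_combination halt - hsplit

end FreeGroup

open FreeGroup

lemma mem_words {k n : ℕ} {u : Fk k} : u ∈ words k n ↔ wlen u = n := by
  simp only [words, mem_image, mem_filter, mem_univ, true_and, wlen]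
  constructor
  · rintro ⟨v, hred, rfl⟩
    rw [toWord_mk, hred, v.toList_length]
  · intro h
    exact ⟨⟨u.toWord, h⟩, reduce_toWord u, mk_toWord⟩

lemma nu_eq_card_reducedWordsFromTo (k n : ℕ) (x y : Fin k × Bool) :
    nu k n x y = #(reducedWordsFromTo n x y) := by
  rw [nu, ← card_image_of_injective _ toWord_injective]
  congr 1
  ext L
  simp only [wordsXY, mem_image, mem_filter, mem_words, reducedWordsFromTo,
    reducedWordsFrom, mem_reducedWords]
  constructor
  · rintro ⟨u, ⟨hlen, hfirst, hlast⟩, rfl⟩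
    exact ⟨⟨⟨hlen, isReduced_toWord⟩, hfirst⟩, hlast⟩
  · rintro ⟨⟨⟨hlen, hred⟩, hfirst⟩, hlast⟩
    have hL : (mk L).toWord = L := by rw [toWord_mk, hred.reduce_eq]
    refine ⟨mk L, ?_, hL⟩
    simp only [wlen, firstLetter, lastLetter, hL]
    exact ⟨hlen, hfirst, hlast⟩

/-- for `k ≥ 2` and `n ≥ 2`: `|2k·α_n - (2k-1)^{n-1}| ≤ 3`. -/
theorem alph_est (k : ℕ) (hk : 2 ≤ k) (n : ℕ) (hn : 2 ≤ n) :
    |2 * (k : ℤ) * alph k n hk - (2 * (k : ℤ) - 1) ^ (n - 1)| ≤ 3 := by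
  have h := two_mul_card_mul_card_reducedWordsFromTo_sub_pow (α := Fin k) (by omega : 0 < n)
    (x := (⟨0, by omega⟩, true)) (y := (⟨1, by omega⟩, true)) (by simp)
  rw [Fintype.card_fin, ← nu_eq_card_reducedWordsFromTo] at h
  rw [alph, h, abs_pow, abs_neg, abs_one, one_pow]
  norm_num

end
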